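/- arXiv:2209.07719 — 3 statements merged into one kernel-verified Lean document; each statement's English description precedes it below -/
import Mathlib

section
/- Let N be a positive integer, n a positive divisor of N, and σ₀ = (1 2 … N) ∈ S_N. Let τ be an N-cycle in S_N commuting with σ₀ⁿ, and let a be a positive integer with a ≤ N. Then the n integers τ⁰(a) = a, τ(a), …, τ^{n−1}(a) are pairwise incongruent modulo n, and there exists a unique integer b with 0 ≤ b < N/n and gcd(b, N/n) = 1 such that τⁿ(a) ≡ a + b·n (mod N). -/
/-!
Since `τ` commutes with `σ₀ⁿ`, i.e. with translation by `n`, it maps residue classes mod `n` into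
residue classes, and so do its powers. If `τ^d(y) ≡ y (mod n)` with `d > 0`, the residues along
the orbit of `y` are `d`-periodic; the orbit is all of `{1, …, N}`, which meets all `n` classes,
so `n ≤ d`. This gives the incongruence of `a, …, τ^{n-1}(a)` and, by pigeonhole,
`τⁿ(a) ≡ a (mod n)`, i.e. `τⁿ(a) = σ₀^{bn}(a)` for some `b < N/n`. Both `τⁿ` and `σ₀^{bn}` commute
with the transitive `τ`, so they are equal, and comparing orders gives
`N/n = ord(σ₀^{bn}) = (N/n) / gcd(b, N/n)`.
-/

open Equiv Function

namespace Equiv.Perm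

variable {α β : Type*}

section Fibres

variable {σ : Perm α} {f : α → β}

theorem apply_pow_eq_apply_pow (hσ : ∀ x y, f x = f y → f (σ x) = f (σ y)) (k : ℕ) {x y : α}
    (h : f x = f y) : f ((σ ^ k) x) = f ((σ ^ k) y) := by
  induction k with
  | zero => simpa
  | succ k ih => simpa only [pow_succ', mul_apply] using hσ _ _ ih

theorem periodic_apply_pow (hσ : ∀ x y, f x = f y → f (σ x) = f (σ y)) {y : α} {d : ℕ}
    (hd : f ((σ ^ d) y) = f y) : Periodic (fun m : ℕ => f ((σ ^ m) y)) d := fun m => by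
  simpa only [pow_add, mul_apply] using apply_pow_eq_apply_pow hσ m hd

variable [Fintype β] (hf : Surjective f) (hσ : ∀ x y, f x = f y → f (σ x) = f (σ y))
  (hσt : ∀ y z, ∃ m : ℕ, (σ ^ m) y = z)
include hf hσ hσt

theorem card_le_of_apply_pow_eq {y : α} {d : ℕ} (hd0 : 0 < d) (hd : f ((σ ^ d) y) = f y) :
    Fintype.card β ≤ d := by
  classical
  have hcover : Finset.univ ⊆ (Finset.range d).image (fun m => f ((σ ^ m) y)) := by
    intro b _
    obtain ⟨z, rfl⟩ := hf b
    obtain ⟨m, rfl⟩ := hσt y z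
    exact Finset.mem_image.2 ⟨m % d, Finset.mem_range.2 (Nat.mod_lt _ hd0),
      (periodic_apply_pow hσ hd).map_mod_nat m⟩
  simpa using (Finset.card_le_card hcover).trans Finset.card_image_le

theorem card_le_sub_of_apply_pow_eq {x : α} {k k' : ℕ} (hkk' : k < k')
    (h : f ((σ ^ k) x) = f ((σ ^ k') x)) : Fintype.card β ≤ k' - k := by
  refine card_le_of_apply_pow_eq hf hσ hσt (y := (σ ^ k) x) (Nat.sub_pos_of_lt hkk') ?_
  rwa [← mul_apply, ← pow_add, Nat.sub_add_cancel hkk'.le, eq_comm]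

theorem injOn_apply_pow (x : α) :
    Set.InjOn (fun k : ℕ => f ((σ ^ k) x)) (Set.Iio (Fintype.card β)) := by
  intro k hk k' hk' h
  by_contra hne
  rcases Nat.lt_or_gt_of_ne hne with hlt | hlt
  · have := card_le_sub_of_apply_pow_eq hf hσ hσt hlt h
    simp only [Set.mem_Iio] at hk'
    omega
  · have := card_le_sub_of_apply_pow_eq hf hσ hσt hlt h.symm
    simp only [Set.mem_Iio] at hk
    omega

theorem apply_pow_card_eq (x : α) : f ((σ ^ Fintype.card β) x) = f x := by
  classical
  set n := Fintype.card β
  have himage : (Finset.range n).image (fun k => f ((σ ^ k) x)) = Finset.univ := by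
    refine Finset.eq_univ_of_card _ ?_
    rw [Finset.card_image_of_injOn (by simpa using injOn_apply_pow hf hσ hσt x),
      Finset.card_range]
  obtain ⟨k, hk, hkn⟩ := Finset.mem_image.1 (himage ▸ Finset.mem_univ (f ((σ ^ n) x)))
  rcases Nat.eq_zero_or_pos k with rfl | hk0
  · simpa using hkn.symm
  · have hkn' := Finset.mem_range.1 hk
    have := card_le_sub_of_apply_pow_eq hf hσ hσt hkn' hkn
    omega

end Fibres

theorem apply_eq_apply_of_commute {τ ρ : Perm α} {f : α → β} (hcomm : Commute τ ρ)
    (hρ : ∀ j x, f ((ρ ^ j) x) = f x) (hfib : ∀ x y, f x = f y → ∃ j : ℕ, (ρ ^ j) x = y)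
    (x y : α) (h : f x = f y) : f (τ x) = f (τ y) := by
  obtain ⟨j, rfl⟩ := hfib x y h
  rw [← mul_apply, (hcomm.pow_right j).eq, mul_apply, hρ]

theorem eq_of_commute_of_apply_eq {τ π₁ π₂ : Perm α} (h₁ : Commute τ π₁) (h₂ : Commute τ π₂)
    {a : α} (ha : ∀ z, ∃ m : ℕ, (τ ^ m) a = z) (h : π₁ a = π₂ a) : π₁ = π₂ := by
  ext z
  obtain ⟨m, rfl⟩ := ha z
  rw [← mul_apply, ← (h₁.pow_left m).eq, mul_apply, h, ← mul_apply, (h₂.pow_left m).eq,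
    mul_apply]

theorem IsCycle.exists_pow_apply_eq_of_card_support [Fintype α] [DecidableEq α] {σ : Perm α}
    (hσ : σ.IsCycle) (h : σ.support.card = Fintype.card α) (x y : α) : ∃ m : ℕ, (σ ^ m) x = y := by
  have hsupp : σ.support = Finset.univ := Finset.eq_univ_of_card _ h
  exact hσ.exists_pow_eq (mem_support.1 (hsupp ▸ Finset.mem_univ x))
    (mem_support.1 (hsupp ▸ Finset.mem_univ y))

end Equiv.Perm

theorem coprime_of_pow_eq_pow_pow {G : Type*} [Monoid G] {x y : G} (hx : IsOfFinOrder x)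
    (hxy : orderOf y = orderOf x) {n b : ℕ} (hn : 0 < n) (hdvd : n ∣ orderOf x)
    (h : y ^ n = (x ^ n) ^ b) : Nat.Coprime b (orderOf x / n) := by
  have hord : orderOf ((x ^ n) ^ b) = orderOf x / n := by
    rw [← h, orderOf_pow_of_dvd hn.ne' (hxy ▸ hdvd), hxy]
  obtain ⟨M, hM⟩ := hdvd
  have hM0 : M ≠ 0 := by rintro rfl; simpa [hM] using hx.orderOf_pos
  rw [← pow_mul, hx.orderOf_pow, hM, Nat.gcd_mul_left, Nat.mul_div_mul_left _ _ hn,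
    Nat.mul_div_cancel_left _ hn, Nat.div_eq_self] at hord
  rw [hM, Nat.mul_div_cancel_left _ hn, Nat.coprime_comm]
  exact hord.resolve_left hM0

theorem Nat.eq_of_add_mul_modEq {n M a b b' : ℕ} (hn : n ≠ 0) (hb : b < M) (hb' : b' < M)
    (h : a + b * n ≡ a + b' * n [MOD M * n]) : b = b' :=
  ((Nat.ModEq.add_left_cancel' a h).mul_right_cancel' hn).eq_of_lt_of_lt hb hb'

section finRotate

variable {N n : ℕ}

theorem val_finRotate_pow_apply (m : ℕ) (x : Fin N) :
    ((finRotate N ^ m) x).val = (x.val + m) % N := by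
  rcases N with _ | N
  · exact x.elim0
  induction m with
  | zero => simp [Nat.mod_eq_of_lt x.isLt]
  | succ m ih =>
    rw [pow_succ', Perm.mul_apply, finRotate_apply, Fin.val_add, ih, Fin.val_one',
      Nat.mod_add_mod, Nat.add_mod_mod, add_assoc]

theorem orderOf_finRotate (hN : 0 < N) : orderOf (finRotate N) = N := by
  rcases Nat.lt_or_ge N 2 with h | h
  · obtain rfl : N = 1 := by omega
    exact orderOf_eq_one_iff.2 (Subsingleton.elim _ _)
  · rw [(isCycle_finRotate_of_le h).orderOf, support_finRotate_of_le h, Finset.card_univ,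
      Fintype.card_fin]

theorem surjective_natCast_val [NeZero n] (hN : 0 < N) (hn : n ∣ N) :
    Surjective (fun x : Fin N => (x.val : ZMod n)) := fun r =>
  ⟨⟨r.val, r.val_lt.trans_le (Nat.le_of_dvd hN hn)⟩, ZMod.natCast_zmod_val r⟩

theorem natCast_val_finRotate_pow_pow_apply (hn : n ∣ N) (j : ℕ) (x : Fin N) :
    ((((finRotate N ^ n) ^ j) x).val : ZMod n) = x.val := by
  rw [← pow_mul, val_finRotate_pow_apply,
    (ZMod.natCast_eq_natCast_iff _ _ _).2 ((Nat.mod_modEq _ N).of_dvd hn)]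
  simp

theorem exists_finRotate_pow_pow_apply_eq (hn0 : 0 < n) (hn : n ∣ N) {x y : Fin N}
    (h : (x.val : ZMod n) = y.val) : ∃ b < N / n, ((finRotate N ^ n) ^ b) x = y := by
  obtain ⟨M, rfl⟩ := hn
  have hxy : x.val ≡ y.val + n * M [MOD n] := by
    simpa [← ZMod.natCast_eq_natCast_iff] using h
  obtain ⟨q, hq⟩ := (Nat.modEq_iff_dvd' (by omega)).1 hxy
  have hM0 : 0 < M := Nat.pos_of_mul_pos_left (Fin.pos x)
  refine ⟨q % M, by rw [Nat.mul_div_cancel_left _ hn0]; exact Nat.mod_lt _ hM0, Fin.ext ?_⟩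
  rw [← pow_mul, val_finRotate_pow_apply, ← Nat.mul_mod_mul_left, ← hq, Nat.add_mod_mod,
    Nat.add_sub_cancel' (by omega), Nat.add_mod_right, Nat.mod_eq_of_lt y.isLt]

theorem natCast_val_apply_eq_of_commute (hn0 : 0 < n) (hn : n ∣ N) {τ : Perm (Fin N)}
    (hcomm : Commute τ (finRotate N ^ n)) (x y : Fin N) (h : (x.val : ZMod n) = y.val) :
    ((τ x).val : ZMod n) = (τ y).val :=
  Perm.apply_eq_apply_of_commute hcomm (natCast_val_finRotate_pow_pow_apply hn)
    (fun _ _ h => (exists_finRotate_pow_pow_apply_eq hn0 hn h).imp fun _ hb => hb.2) x y h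

end finRotate

/-- **Lemma 1.** Let `n ∣ N`, `σ₀ = (1 2 … N)`, `τ` an `N`-cycle commuting with `σ₀ⁿ`, and
`1 ≤ a ≤ N` (realized as the element `⟨(a−1) % N⟩` of `Fin N`).  Then `a, τ(a), …, τ^{n−1}(a)`
are pairwise incongruent modulo `n`, and there is a unique `b` with `0 ≤ b < N/n`,
`gcd(b, N/n) = 1` and `τⁿ(a) ≡ a + b·n (mod N)`. -/
theorem orbit_incongruent_mod_n (N n : ℕ) (hN : 0 < N) (hn0 : 0 < n) (hn : n ∣ N)
    (τ : Equiv.Perm (Fin N)) (hτ : τ.IsCycle ∧ τ.support.card = N)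
    (hτc : τ ∈ Subgroup.centralizer {(finRotate N) ^ n})
    (a : ℕ) (ha1 : 1 ≤ a) (ha2 : a ≤ N) :
    (∀ k k' : ℕ, k < n → k' < n →
        (((τ ^ k) ⟨(a - 1) % N, Nat.mod_lt _ hN⟩ : Fin N).val + 1 ≡
          ((τ ^ k') ⟨(a - 1) % N, Nat.mod_lt _ hN⟩ : Fin N).val + 1 [MOD n]) → k = k') ∧
    ∃! b : ℕ, b < N / n ∧ Nat.gcd b (N / n) = 1 ∧
      (((τ ^ n) ⟨(a - 1) % N, Nat.mod_lt _ hN⟩ : Fin N).val + 1 ≡ a + b * n [MOD N]) := by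
  have : NeZero n := ⟨hn0.ne'⟩
  set a₀ : Fin N := ⟨(a - 1) % N, Nat.mod_lt _ hN⟩
  have hf := surjective_natCast_val (n := n) hN hn
  have htrans := hτ.1.exists_pow_apply_eq_of_card_support (by rw [hτ.2, Fintype.card_fin])
  have hcomm : Commute τ (finRotate N ^ n) := Subgroup.mem_centralizer_singleton_iff.1 hτc
  have hσ := natCast_val_apply_eq_of_commute hn0 hn hcomm
  have hinj := Perm.injOn_apply_pow hf hσ htrans a₀
  have hτn := Perm.apply_pow_card_eq hf hσ htrans a₀
  rw [ZMod.card] at hinj hτn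
  refine ⟨fun k k' hk hk' h => hinj hk hk' ?_, ?_⟩
  · exact (ZMod.natCast_eq_natCast_iff _ _ _).2 (Nat.ModEq.add_right_cancel' 1 h)
  obtain ⟨b, hb, hba⟩ := exists_finRotate_pow_pow_apply_eq hn0 hn hτn.symm
  have hτn_eq : τ ^ n = (finRotate N ^ n) ^ b :=
    Perm.eq_of_commute_of_apply_eq (Commute.self_pow τ n) (hcomm.pow_right b) (htrans a₀) hba.symm
  have hcop := coprime_of_pow_eq_pow_pow (isOfFinOrder_of_finite _)
    (by rw [hτ.1.orderOf, hτ.2, orderOf_finRotate hN]) hn0 (by rwa [orderOf_finRotate hN]) hτn_eq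
  rw [orderOf_finRotate hN] at hcop
  have hcong : ((τ ^ n) a₀).val + 1 ≡ a + b * n [MOD N] := by
    rw [hτn_eq, ← pow_mul, val_finRotate_pow_apply,
      show a₀.val = a - 1 from Nat.mod_eq_of_lt (by omega)]
    have hsum : a - 1 + n * b + 1 = a + b * n := by rw [Nat.mul_comm]; omega
    exact hsum ▸ (Nat.mod_modEq _ N).add_right 1
  refine ⟨b, ⟨hb, hcop, hcong⟩, fun b' ⟨hb', _, hcong'⟩ => ?_⟩
  refine Nat.eq_of_add_mul_modEq hn0.ne' hb' hb (a := a) ?_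
  rw [Nat.div_mul_cancel hn]
  exact hcong'.symm.trans hcong
end

section
/- Let n be a positive integer, σ₀,ₙ = (1 2 … n) ∈ S_n, and for I ⊆ {1,…,n} let Z_I^{(n)} be the set of n-cycles ω ∈ S_n with ω ≠ σ₀,ₙ⁻¹ such that ωσ₀,ₙ(a) = a for all a ∈ I. For a non-negative integer m ≤ n let F_m^{(n)} be the family of subsets of {1,…,n} of cardinality m, and let Y_m^{(n)} be the union of Z_I^{(n)} over all I ∈ F_m^{(n)}. Then for any positive integer j ≤ n, |Y_j^{(n)}| = ∑_{m=0}^{n−j−1} (−1)^m·binom(j+m−1, j−1)·∑_{I ∈ F_{j+m}^{(n)}} |Z_I^{(n)}| (an equality of integers). -/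
open scoped Classical

noncomputable section

/-- `Z_I^{(n)}`: the set of `n`-cycles `ω ≠ σ₀ₙ⁻¹` in `S_n` with `ωσ₀ₙ(a) = a` for all
`a ∈ I`, where `σ₀ₙ = (1 2 … n)`. -/
def Zset (n : ℕ) (I : Finset (Fin n)) : Finset (Equiv.Perm (Fin n)) :=
  Finset.univ.filter fun ω =>
    ω.IsCycle ∧ ω.support.card = n ∧ ω ≠ (finRotate n)⁻¹ ∧ ∀ a ∈ I, (ω * finRotate n) a = a

/-- `Y_m^{(n)}`: the union of the `Z_I^{(n)}` over all subsets `I` of cardinality `m`. -/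
def Yset (n m : ℕ) : Finset (Equiv.Perm (Fin n)) :=
  (Finset.powersetCard m (Finset.univ : Finset (Fin n))).biUnion fun I => Zset n I

/-!
For `ω ∈ S := Z_∅^{(n)}` let `Φ(ω)` be the fixed-point set of `ωσ₀,ₙ`. Then `Z_I^{(n)}` consists
of the `ω ∈ S` with `I ⊆ Φ(ω)`, so `ω ∈ Y_j^{(n)}` iff `|Φ(ω)| ≥ j`, and double counting gives
`∑_{|I| = k} |Z_I^{(n)}| = ∑_{ω ∈ S} binom(|Φ(ω)|, k)`. Since `ω ≠ σ₀,ₙ⁻¹`, `|Φ(ω)| < n`, and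
the theorem reduces, one `ω` at a time, to the identity
`∑_m (-1)^m binom(j+m-1, j-1) binom(f, j+m) = [j ≤ f]`, which is Chu–Vandermonde
`binom(f-j, f-j) = ∑_m binom(-j, m) binom(f, f-j-m)` read through upper negation.
-/

open Finset

theorem sum_range_neg_one_pow_mul_choose_mul_choose_eq_one (i d : ℕ) :
    ∑ m ∈ range (d + 1), (-1 : ℤ) ^ m * (i + m).choose i * (i + 1 + d).choose (i + 1 + m) = 1 := by
  have h := Ring.add_choose_eq (r := -((i + 1 : ℕ) : ℤ)) (s := ((i + 1 + d : ℕ) : ℤ)) d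
    (Commute.all _ _)
  rw [show -((i + 1 : ℕ) : ℤ) + ((i + 1 + d : ℕ) : ℤ) = (d : ℤ) by push_cast; ring,
    Ring.choose_natCast, Nat.choose_self, Nat.cast_one,
    Nat.sum_antidiagonal_eq_sum_range_succ_mk] at h
  refine Eq.trans (sum_congr rfl fun m hm => ?_) h.symm
  have hm : m ≤ d := Nat.lt_succ_iff.mp (mem_range.mp hm)
  rw [Ring.choose_neg, show ((i + 1 : ℕ) : ℤ) + m - 1 = ((i + m : ℕ) : ℤ) by push_cast; ring,
    Ring.choose_natCast, Ring.choose_natCast, Int.negOnePow_def, Units.smul_def, zpow_natCast,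
    Nat.choose_symm_of_eq_add (show i + 1 + d = (i + 1 + m) + (d - m) by omega),
    Nat.choose_symm_add]
  push_cast
  ring

theorem sum_range_neg_one_pow_mul_choose_mul_choose {j f M : ℕ} (hj : 1 ≤ j) (hf : f < j + M) :
    ∑ m ∈ range M, (-1 : ℤ) ^ m * (j + m - 1).choose (j - 1) * f.choose (j + m) =
      if j ≤ f then 1 else 0 := by
  have hvanish : ∀ m, f < j + m →
      (-1 : ℤ) ^ m * (j + m - 1).choose (j - 1) * f.choose (j + m) = 0 := fun m hm => by
    rw [Nat.choose_eq_zero_of_lt hm, Nat.cast_zero, mul_zero]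
  split_ifs with hjf
  · obtain ⟨i, rfl⟩ : ∃ i, j = i + 1 := ⟨j - 1, by omega⟩
    obtain ⟨d, rfl⟩ : ∃ d, f = i + 1 + d := ⟨f - (i + 1), by omega⟩
    rw [← sum_subset (range_subset_range.2 (show d + 1 ≤ M by omega))
      fun m _ hm => hvanish m (by simp only [mem_range] at hm; omega)]
    simpa using sum_range_neg_one_pow_mul_choose_mul_choose_eq_one i d
  · exact sum_eq_zero fun m _ => hvanish m (by omega)

theorem card_filter_le_eq_sum_neg_one_pow {α : Type*} (S : Finset α) (g : α → ℕ) {j M : ℕ}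
    (hj : 1 ≤ j) (hg : ∀ a ∈ S, g a < j + M) :
    (#(S.filter (j ≤ g ·)) : ℤ) =
      ∑ m ∈ range M, (-1 : ℤ) ^ m * (j + m - 1).choose (j - 1) *
        ∑ a ∈ S, ((g a).choose (j + m) : ℤ) := by
  rw [natCast_card_filter]
  calc ∑ a ∈ S, (if j ≤ g a then (1 : ℤ) else 0)
      = ∑ a ∈ S, ∑ m ∈ range M,
          (-1 : ℤ) ^ m * (j + m - 1).choose (j - 1) * (g a).choose (j + m) :=
        sum_congr rfl fun a ha => (sum_range_neg_one_pow_mul_choose_mul_choose hj (hg a ha)).symm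
    _ = _ := by
        rw [sum_comm]
        simp only [mul_sum]

section DoubleCounting

variable {α β : Type*} [Fintype β] [DecidableEq β] (S : Finset α) (F : α → Finset β)

theorem sum_powersetCard_card_filter_subset (k : ℕ) :
    ∑ I ∈ powersetCard k univ, #(S.filter (I ⊆ F ·)) = ∑ a ∈ S, (#(F a)).choose k := by
  simp only [card_filter]
  rw [sum_comm]
  refine sum_congr rfl fun a _ => ?_
  rw [← card_filter, ← card_powersetCard]
  congr 1
  ext I
  simp [and_comm]

theorem biUnion_powersetCard_filter_subset [DecidableEq α] (j : ℕ) :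
    (powersetCard j univ).biUnion (fun I => S.filter (I ⊆ F ·)) =
      S.filter fun a => j ≤ #(F a) := by
  ext a
  simp only [mem_biUnion, mem_powersetCard, mem_filter, subset_univ, true_and]
  constructor
  · rintro ⟨I, rfl, ha, hI⟩
    exact ⟨ha, card_le_card hI⟩
  · rintro ⟨ha, hj⟩
    obtain ⟨I, hI, rfl⟩ := exists_subset_card_eq hj
    exact ⟨I, rfl, ha, hI⟩

end DoubleCounting

theorem Zset_eq_filter (n : ℕ) (I : Finset (Fin n)) :
    Zset n I = (Zset n ∅).filter fun ω => I ⊆ (ω * finRotate n).supportᶜ := by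
  ext ω
  simp only [Zset, mem_filter, mem_univ, true_and, subset_iff, mem_compl,
    Equiv.Perm.mem_support, not_not, notMem_empty, IsEmpty.forall_iff, implies_true, and_true,
    and_assoc]

theorem card_compl_support_mul_finRotate_lt {n : ℕ} {ω : Equiv.Perm (Fin n)}
    (hω : ω ∈ Zset n ∅) : #(ω * finRotate n).supportᶜ < n := by
  simp only [Zset, mem_filter] at hω
  refine ((card_compl_lt_iff_nonempty _).2 ?_).trans_eq (Fintype.card_fin n)
  rw [nonempty_iff_ne_empty, Ne, Equiv.Perm.support_eq_empty_iff, mul_eq_one_iff_eq_inv]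
  exact hω.2.2.2.1

theorem card_Yset_eq_alternating_sum_general (n j : ℕ) (hj : 1 ≤ j) :
    ((Yset n j).card : ℤ) =
      ∑ m ∈ Finset.range (n - j),
        (-1 : ℤ) ^ m * (Nat.choose (j + m - 1) (j - 1) : ℤ) *
          ∑ I ∈ Finset.powersetCard (j + m) (Finset.univ : Finset (Fin n)),
            ((Zset n I).card : ℤ) := by
  have hY : Yset n j = (Zset n ∅).filter fun ω => j ≤ #(ω * finRotate n).supportᶜ := by
    rw [Yset, ← biUnion_powersetCard_filter_subset]
    exact biUnion_congr rfl fun I _ => Zset_eq_filter n I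
  have hZ : ∀ k, ∑ I ∈ powersetCard k univ, (#(Zset n I) : ℤ) =
      ∑ ω ∈ Zset n ∅, ((#(ω * finRotate n).supportᶜ).choose k : ℤ) := fun k => by
    rw [sum_congr rfl fun I _ => congrArg (fun s => (#s : ℤ)) (Zset_eq_filter n I)]
    exact_mod_cast sum_powersetCard_card_filter_subset _ _ k
  rw [hY, card_filter_le_eq_sum_neg_one_pow (M := n - j) _ _ hj
    fun ω hω => by have := card_compl_support_mul_finRotate_lt hω; omega]
  simp only [hZ]

/-- **Lemma 8.** For `1 ≤ j ≤ n`,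
`|Y_j^{(n)}| = ∑_{m=0}^{n−j−1} (−1)^m·C(j+m−1, j−1)·∑_{|I| = j+m} |Z_I^{(n)}|`. -/
theorem card_Yset_eq_alternating_sum (n j : ℕ) (hn : 0 < n) (hj : 1 ≤ j) (hjn : j ≤ n) :
    ((Yset n j).card : ℤ) =
      ∑ m ∈ Finset.range (n - j),
        (-1 : ℤ) ^ m * (Nat.choose (j + m - 1) (j - 1) : ℤ) *
          ∑ I ∈ Finset.powersetCard (j + m) (Finset.univ : Finset (Fin n)),
            ((Zset n I).card : ℤ) :=
  card_Yset_eq_alternating_sum_general n j hj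
end
end

section
/- Let n be a positive integer, σ₀,ₙ = (1 2 … n) ∈ S_n, and let I ⊆ {1,…,n} with |I| < n. Then the number of n-cycles ω ∈ S_n with ω ≠ σ₀,ₙ⁻¹ such that ωσ₀,ₙ(a) = a for all a ∈ I equals (n − |I| − 1)! − 1. -/
/-!
Writing `σ = finRotate n`, the condition `(ω * σ) a = a` for `a ∈ I` says that `ω` agrees with
`σ⁻¹` on `σ(I)`. So it suffices to count the cycles with support `s` that agree with a given
cycle `c` (of support `s`) on a set `J ⊆ s`. Deleting a point `x ∈ J` from such a cycle,
`ω ↦ (x ω(x)) ω`, is a bijection onto the cycles with support `s \ {x}` agreeing with the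
contracted cycle `(x c(x)) c` on `J \ {x}`; its inverse splices `x` back in front of `c(x)`.
Hence the count depends only on `|s| - |J|`, and for `J = ∅` it is the number `(|s| - 1)!` of
`|s|`-cycles on `s`. Finally `σ⁻¹` itself is removed.
-/

open scoped Classical

open Equiv Equiv.Perm Finset Nat

namespace Equiv.Perm

variable {α : Type*} [Fintype α] [DecidableEq α]

theorem IsCycle.swap_mul_of_apply_eq_self {g : Perm α} (hg : g.IsCycle) {x b : α}
    (hx : g x = x) (hb : g b ≠ b) : (swap x b * g).IsCycle := by
  have hbs : b ∈ g.support := mem_support.2 hb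
  obtain ⟨l, hl⟩ : ∃ l, toList g b = b :: l := by
    rcases h : toList g b with _ | ⟨y, l⟩
    · exact absurd (toList_eq_nil_iff.1 h) (not_not.2 hbs)
    · have hy := toList_getElem_zero g b hbs
      simp only [h, List.getElem_cons_zero] at hy
      exact ⟨l, by rw [hy]⟩
  have hxl : x ∉ b :: l := hl ▸ fun h =>
    mem_support.1 ((mem_toList_iff.1 h).1.mem_support_iff.1 hbs) hx
  -- `g = formPerm (b :: l)`, and prepending `x` to the list multiplies it by `swap x b`
  rw [← hg.cycleOf_eq hb, ← formPerm_toList, hl, ← List.formPerm_cons_cons]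
  exact List.isCycle_formPerm (List.nodup_cons.2 ⟨hxl, hl ▸ nodup_toList g b⟩) (by simp)

theorem support_swap_mul_of_apply_eq_self {g : Perm α} {x b : α} (hx : g x = x)
    (hb : g b ≠ b) : (swap x b * g).support = insert x g.support := by
  have hxb : x ≠ b := by rintro rfl; exact hb hx
  have hgb : g b ≠ x := fun h => hxb (g.injective (hx.trans h.symm))
  have hfx : (swap x b * g) x = b := by simp [hx]
  have hffx : (swap x b * g) b = g b := by simp [swap_apply_of_ne_of_ne hgb hb]
  have hsupp := support_swap_mul_eq (swap x b * g) x (by rw [hfx, hffx]; exact hgb)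
  rw [hfx, swap_mul_self_mul] at hsupp
  rw [hsupp, ← erase_eq, insert_erase (by rw [mem_support, hfx]; exact hxb.symm)]

theorem IsCycle.apply_apply_ne_self {g : Perm α} (hg : g.IsCycle) (hs : 3 ≤ #g.support)
    {x : α} (hx : g x ≠ x) : g (g x) ≠ x := by
  intro h
  rw [hg.eq_swap_of_apply_apply_eq_self hx h, card_support_swap hx.symm] at hs
  omega

theorem card_isCycle_support_eq {s : Finset α} (hs : 2 ≤ #s) :
    #{ω : Perm α | ω.IsCycle ∧ ω.support = s} = (#s - 1)! := by
  have hcount : #{g : Perm s | g.cycleType = {#s}} = (#s - 1)! := by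
    rw [card_of_cycleType_singleton hs (by simp), Fintype.card_coe, Nat.choose_self, mul_one]
  rw [← hcount]
  symm
  refine card_bij (fun g _ => ofSubtype g) ?_ (fun g _ h _ hgh => ofSubtype_injective hgh) ?_
  · intro g hg
    simp only [mem_filter, mem_univ, true_and] at hg ⊢
    have htype : (ofSubtype g).cycleType = {#s} := by rw [cycleType_ofSubtype, hg]
    refine ⟨card_cycleType_eq_one.1 (by simp [htype]), eq_of_subset_of_card_le ?_ ?_⟩
    · intro y hy
      rw [support_ofSubtype, mem_map] at hy
      obtain ⟨z, -, rfl⟩ := hy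
      exact z.2
    · rw [← sum_cycleType, htype, Multiset.sum_singleton]
  · intro ω hω
    simp only [mem_filter, mem_univ, true_and] at hω ⊢
    obtain ⟨hcyc, rfl⟩ := hω
    have hω : ofSubtype (ω.subtypePerm fun _ => apply_mem_support) = ω :=
      ofSubtype_subtypePerm _ fun _ => mem_support.2
    exact ⟨_, by rw [← cycleType_ofSubtype, hω, hcyc.cycleType], hω⟩

noncomputable def cyclesAgreeingOn (s J : Finset α) (c : Perm α) : Finset (Perm α) :=
  {ω | ω.IsCycle ∧ ω.support = s ∧ ∀ y ∈ J, ω y = c y}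

theorem card_cyclesAgreeingOn_erase {s J : Finset α} {c : Perm α} (hcs : c.support = s)
    (hs : 3 ≤ #s) {x : α} (hxJ : x ∈ J) (hxs : x ∈ s) :
    #(cyclesAgreeingOn s J c) =
      #(cyclesAgreeingOn (s.erase x) (J.erase x) (swap x (c x) * c)) := by
  have hcx : c x ∈ s.erase x := by
    rw [← hcs] at hxs ⊢
    exact mem_erase.2 ⟨mem_support.1 hxs, apply_mem_support.2 hxs⟩
  refine card_bij' (fun ω _ => swap x (c x) * ω) (fun ω _ => swap x (c x) * ω) ?_ ?_
    (fun ω _ => swap_mul_self_mul _ _ ω) (fun ω _ => swap_mul_self_mul _ _ ω)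
  · intro ω hω
    simp only [cyclesAgreeingOn, mem_filter, mem_univ, true_and] at hω ⊢
    obtain ⟨hcyc, rfl, hagree⟩ := hω
    have hωx : ω x = c x := hagree x hxJ
    have hωωx : ω (ω x) ≠ x := hcyc.apply_apply_ne_self hs (mem_support.1 hxs)
    rw [← hωx]
    refine ⟨hcyc.swap_mul (mem_support.1 hxs) hωωx,
      by rw [support_swap_mul_eq _ _ hωωx, erase_eq], fun y hy => ?_⟩
    simp only [Perm.mul_apply, hagree y (mem_of_mem_erase hy), hωx]
  · intro ω hω
    simp only [cyclesAgreeingOn, mem_filter, mem_univ, true_and] at hω ⊢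
    obtain ⟨hcyc, hsupp, hagree⟩ := hω
    have hωx : ω x = x := notMem_support.1 (hsupp ▸ notMem_erase x s)
    have hωcx : ω (c x) ≠ c x := mem_support.1 (hsupp ▸ hcx)
    refine ⟨hcyc.swap_mul_of_apply_eq_self hωx hωcx, ?_, fun y hy => ?_⟩
    · rw [support_swap_mul_of_apply_eq_self hωx hωcx, hsupp, insert_erase hxs]
    · rcases eq_or_ne y x with rfl | hyx
      · simp [hωx]
      · simp only [Perm.mul_apply, hagree y (mem_erase.2 ⟨hyx, hy⟩), swap_apply_self]

theorem card_cyclesAgreeingOn {s J : Finset α} {c : Perm α} (hc : c.IsCycle)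
    (hcs : c.support = s) (hJs : J ⊆ s) (hJ : #J < #s) :
    #(cyclesAgreeingOn s J c) = (#s - #J - 1)! := by
  induction J using Finset.strongInduction generalizing s c with
  | H J ih =>
  have hs : 2 ≤ #s := hcs ▸ hc.two_le_card_support
  rcases J.eq_empty_or_nonempty with rfl | ⟨x, hxJ⟩
  · simpa [cyclesAgreeingOn] using card_isCycle_support_eq hs
  have hJpos : 0 < #J := card_pos.2 ⟨x, hxJ⟩
  rcases hs.eq_or_lt with hs | hs
  · -- a 2-cycle is determined by its support
    rw [show #s - #J - 1 = 0 by omega, factorial_zero]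
    refine le_antisymm ?_ (card_pos.2 ⟨c, by simp [cyclesAgreeingOn, hc, hcs]⟩)
    calc #(cyclesAgreeingOn s J c) ≤ #{ω : Perm α | ω.IsCycle ∧ ω.support = s} :=
          card_le_card fun ω hω => by
            simp only [cyclesAgreeingOn, mem_filter, mem_univ, true_and] at hω ⊢
            exact ⟨hω.1, hω.2.1⟩
      _ = 1 := by rw [card_isCycle_support_eq hs.le, ← hs]; rfl
  have hxs : x ∈ s := hJs hxJ
  have hcx : c x ≠ x := mem_support.1 (hcs ▸ hxs)
  have hccx : c (c x) ≠ x := hc.apply_apply_ne_self (hcs ▸ hs) hcx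
  have hsupp : (swap x (c x) * c).support = s.erase x := by
    rw [support_swap_mul_eq _ _ hccx, hcs, erase_eq]
  have hcard : #(J.erase x) < #(s.erase x) := by
    rw [card_erase_of_mem hxs, card_erase_of_mem hxJ]; omega
  rw [card_cyclesAgreeingOn_erase hcs hs hxJ hxs,
    ih _ (erase_ssubset hxJ) (hc.swap_mul hcx hccx) hsupp (erase_subset_erase x hJs) hcard,
    card_erase_of_mem hxs, card_erase_of_mem hxJ]
  congr 1
  omega

end Equiv.Perm

theorem card_Zset_eq_general (n : ℕ) (I : Finset (Fin n)) (hI : I.card < n) :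
    (Finset.univ.filter fun ω : Equiv.Perm (Fin n) =>
        ω.IsCycle ∧ ω.support.card = n ∧ ω ≠ (finRotate n)⁻¹ ∧
          ∀ a ∈ I, (ω * finRotate n) a = a).card =
      Nat.factorial (n - I.card - 1) - 1 := by
  obtain rfl | hn : n = 1 ∨ 2 ≤ n := by omega
  · simp [card_support_ne_one, show I.card = 0 by omega]
  set σ := finRotate n
  have hσ : σ⁻¹.IsCycle := (isCycle_finRotate_of_le hn).inv
  have hσs : σ⁻¹.support = univ := by rw [support_inv, support_finRotate_of_le hn]
  have hset : (univ.filter fun ω : Perm (Fin n) => ω.IsCycle ∧ #ω.support = n ∧ ω ≠ σ⁻¹ ∧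
      ∀ a ∈ I, (ω * σ) a = a) = (cyclesAgreeingOn univ (I.map σ.toEmbedding) σ⁻¹).erase σ⁻¹ := by
    ext ω
    have hsupp : #ω.support = n ↔ ω.support = univ := by
      rw [← card_eq_iff_eq_univ, Fintype.card_fin]
    simp only [cyclesAgreeingOn, mem_filter, mem_univ, true_and, mem_erase, forall_mem_map]
    simp only [hsupp, Equiv.coe_toEmbedding, Perm.inv_def, symm_apply_apply, Perm.mul_apply]
    tauto
  have hmem : σ⁻¹ ∈ cyclesAgreeingOn univ (I.map σ.toEmbedding) σ⁻¹ := by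
    simp [cyclesAgreeingOn, hσ, hσs]
  rw [hset, card_erase_of_mem hmem,
    card_cyclesAgreeingOn hσ hσs (subset_univ _) (by simpa using hI),
    card_map, Finset.card_univ, Fintype.card_fin]

/-- **Lemma 9.** For `σ₀ₙ = (1 2 … n)` and `I ⊆ {1,…,n}` with `|I| < n`, the number of
`n`-cycles `ω ≠ σ₀ₙ⁻¹` in `S_n` such that `ωσ₀ₙ` fixes every element of `I` equals
`(n − |I| − 1)! − 1`. -/
theorem card_Zset_eq (n : ℕ) (hn : 0 < n) (I : Finset (Fin n)) (hI : I.card < n) :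
    (Finset.univ.filter fun ω : Equiv.Perm (Fin n) =>
        ω.IsCycle ∧ ω.support.card = n ∧ ω ≠ (finRotate n)⁻¹ ∧
          ∀ a ∈ I, (ω * finRotate n) a = a).card =
      Nat.factorial (n - I.card - 1) - 1 :=
  card_Zset_eq_general n I hI
end
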